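/- arXiv:1301.2005 — 2 statements merged into one kernel-verified Lean document; each statement's English description precedes it below -/
import Mathlib

section
/- Let Π = {Ξ₁,…,Ξₙ} be a finite family of type sets over a finite nonempty set T_Σ of types, with each Ξᵢ ⊆ T_Σ. If the intersection ⋂Π = Ξ₁ ∩ … ∩ Ξₙ is nonempty, then the set of df-minimal types w.r.t. Π equals ⋂Π, for any pseudo-distance d and aggregation function f. -/
open Classical in
/-- Distance from a type to a type set: the minimum over the set, with a
default value `D` for the empty set. -/
noncomputable def distToSet {τ : Type*} (d : τ → τ → NNReal) (D : NNReal)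
    (t : τ) (Ξ : Finset τ) : NNReal :=
  if h : Ξ.Nonempty then Ξ.inf' h (d t) else D

theorem distToSet_eq_zero_iff {τ : Type*} {d : τ → τ → NNReal}
    (hd₀ : ∀ t₁ t₂, d t₁ t₂ = 0 ↔ t₁ = t₂) (D : NNReal) {t : τ} {Ξ : Finset τ}
    (hΞ : Ξ.Nonempty) : distToSet d D t Ξ = 0 ↔ t ∈ Ξ := by
  rw [distToSet, dif_pos hΞ]
  constructor
  · obtain ⟨s, hs, hds⟩ := Finset.exists_mem_eq_inf' hΞ (d t)
    rw [hds, hd₀]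
    rintro rfl
    exact hs
  · intro ht
    exact nonpos_iff_eq_zero.1 ((Finset.inf'_le _ ht).trans_eq ((hd₀ t t).2 rfl))

theorem aggregate_distToSet_eq_zero_iff {τ ι : Type*} {d : τ → τ → NNReal}
    (hd₀ : ∀ t₁ t₂, d t₁ t₂ = 0 ↔ t₁ = t₂) (D : NNReal) {f : (ι → NNReal) → NNReal}
    (hfzero : ∀ x : ι → NNReal, f x = 0 ↔ ∀ i, x i = 0) {Ξ : ι → Finset τ}
    (hΞ : ∀ i, (Ξ i).Nonempty) (t : τ) :
    f (fun i => distToSet d D t (Ξ i)) = 0 ↔ ∀ i, t ∈ Ξ i := by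
  rw [hfzero]
  exact forall_congr' fun i => distToSet_eq_zero_iff hd₀ D (hΞ i)

open Classical in
theorem minimal_types_eq_inter_general {τ : Type*} [DecidableEq τ] {n : ℕ}
    (T : Finset τ) (Ξ : Fin n → Finset τ)
    (hsub : ∀ i, Ξ i ⊆ T)
    (d : τ → τ → NNReal)
    (hd₀ : ∀ t₁ t₂, d t₁ t₂ = 0 ↔ t₁ = t₂)
    (D : NNReal)
    (f : (Fin n → NNReal) → NNReal)
    (hfzero : ∀ x : Fin n → NNReal, f x = 0 ↔ ∀ i, x i = 0)
    (hinter : ∃ t, ∀ i, t ∈ Ξ i) :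
    {t ∈ T | ∀ t' ∈ T,
        f (fun i => distToSet d D t (Ξ i)) ≤ f (fun i => distToSet d D t' (Ξ i))}
      = {t ∈ T | ∀ i, t ∈ Ξ i} := by
  obtain ⟨t₀, ht₀⟩ := hinter
  have hcost := aggregate_distToSet_eq_zero_iff hd₀ D hfzero fun i => ⟨t₀, ht₀ i⟩
  ext t
  simp only [Finset.mem_filter, and_congr_right_iff]
  intro _
  constructor
  · intro hmin i
    -- `t₀ ∈ T` comes from an index `i`: for `n = 0` nothing places `t₀` in `T`.
    have hle := hmin t₀ (hsub i (ht₀ i))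
    rw [(hcost t₀).2 ht₀, nonpos_iff_eq_zero, hcost] at hle
    exact hle i
  · intro ht t' _
    rw [(hcost t).2 ht]
    exact zero_le

open Classical in
/-- If `⋂ Π` is nonempty, the `df`-minimal types w.r.t. `Π` are exactly `⋂ Π`. -/
theorem minimal_types_eq_inter {τ : Type*} [DecidableEq τ] {n : ℕ}
    (T : Finset τ) (hT : T.Nonempty) (Ξ : Fin n → Finset τ)
    (hsub : ∀ i, Ξ i ⊆ T)
    (d : τ → τ → NNReal)
    (hd₀ : ∀ t₁ t₂, d t₁ t₂ = 0 ↔ t₁ = t₂)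
    (hdsymm : ∀ t₁ t₂, d t₁ t₂ = d t₂ t₁)
    (D : NNReal)
    (f : (Fin n → NNReal) → NNReal)
    (hfmono : ∀ x y : Fin n → NNReal, (∀ i, x i ≤ y i) → f x ≤ f y)
    (hfzero : ∀ x : Fin n → NNReal, f x = 0 ↔ ∀ i, x i = 0)
    (hinter : ∃ t, ∀ i, t ∈ Ξ i) :
    {t ∈ T | ∀ t' ∈ T,
        f (fun i => distToSet d D t (Ξ i)) ≤ f (fun i => distToSet d D t' (Ξ i))}
      = {t ∈ T | ∀ i, t ∈ Ξ i} :=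
  minimal_types_eq_inter_general T Ξ hsub d hd₀ D f hfzero hinter
end

section
/- Drastic-to-Hamming comparison for minimal types fails in general: there exist a finite set of types T_Σ, a type group Π, and a type τ such that τ is minimal w.r.t. Π under the Hamming distance (with summation aggregation) but not minimal under the drastic distance, or vice versa; concretely, the sets of d^D f^s-minimal and d^H f^s-minimal types over T_Σ = powerset of {A, B} with Π = {{τ : A ∈ τ}, {τ : A ∉ τ, B ∈ τ}, {τ : B ∉ τ}} differ. -/
open Classical

/-- Hamming distance between types (subsets of the concept alphabet). -/
noncomputable def dH (τ₁ τ₂ : Finset (Fin 2)) : NNReal :=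
  (((τ₁ \ τ₂) ∪ (τ₂ \ τ₁)).card : NNReal)

/-- Drastic distance between types. -/
noncomputable def dD (τ₁ τ₂ : Finset (Fin 2)) : NNReal :=
  if τ₁ = τ₂ then 0 else 1

/-- Distance from a type to a nonempty type set: minimum over the set. -/
noncomputable def dSet (d : Finset (Fin 2) → Finset (Fin 2) → NNReal)
    (τ : Finset (Fin 2)) (Ξ : Finset (Finset (Fin 2))) : NNReal :=
  if h : Ξ.Nonempty then Ξ.inf' h (d τ) else 0

/-- The type group Π = {Ξ₀, Ξ₁, Ξ₂} over types = subsets of {A, B}. -/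
noncomputable def Pi3 : Fin 3 → Finset (Finset (Fin 2))
  | 0 => Finset.univ.filter (fun τ => (0 : Fin 2) ∈ τ)
  | 1 => Finset.univ.filter (fun τ => (0 : Fin 2) ∉ τ ∧ (1 : Fin 2) ∈ τ)
  | 2 => Finset.univ.filter (fun τ => (1 : Fin 2) ∉ τ)

/-- λ_{d,f^s}(τ, Π): summation aggregation of the three set-distances. -/
noncomputable def lam (d : Finset (Fin 2) → Finset (Fin 2) → NNReal)
    (τ : Finset (Fin 2)) : NNReal :=
  ∑ i : Fin 3, dSet d τ (Pi3 i)

/-- The set of minimal types w.r.t. Π under distance `d` with summation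
aggregation. -/
noncomputable def minimalTypes (d : Finset (Fin 2) → Finset (Fin 2) → NNReal) :
    Finset (Finset (Fin 2)) :=
  Finset.univ.filter (fun τ => ∀ τ' : Finset (Fin 2), lam d τ ≤ lam d τ')

lemma Pi3_zero : Pi3 0 = {{0}, {0,1}} := by decide
lemma Pi3_one : Pi3 1 = {{1}} := by decide
lemma Pi3_two : Pi3 2 = {∅, {0}} := by decide

lemma lam_eq (d : Finset (Fin 2) → Finset (Fin 2) → NNReal) (τ : Finset (Fin 2)) :
    lam d τ = min (d τ {0}) (d τ {0,1}) + d τ {1} + min (d τ ∅) (d τ {0}) := by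
  simp [lam, Fin.sum_univ_three, Pi3_zero, Pi3_one, Pi3_two, dSet, Finset.inf'_insert,
    Finset.inf'_singleton, Finset.insert_nonempty, min_comm]

lemma dH_eq (a b : Finset (Fin 2)) {n : ℕ} (h : ((a \ b) ∪ (b \ a)).card = n) :
    dH a b = n := by rw [dH, h]

lemma lamH_e : lam dH ∅ = 2 := by
  rw [lam_eq, dH_eq ∅ {0} (n:=1) (by decide), dH_eq ∅ {0,1} (n:=2) (by decide),
    dH_eq ∅ {1} (n:=1) (by decide), dH_eq ∅ ∅ (n:=0) (by decide)]
  norm_num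

lemma lamH_0 : lam dH {0} = 2 := by
  rw [lam_eq, dH_eq {0} {0} (n:=0) (by decide), dH_eq {0} {0,1} (n:=1) (by decide),
    dH_eq {0} {1} (n:=2) (by decide), dH_eq {0} ∅ (n:=1) (by decide)]
  norm_num

lemma lamH_1 : lam dH {1} = 2 := by
  rw [lam_eq, dH_eq {1} {0} (n:=2) (by decide), dH_eq {1} {0,1} (n:=1) (by decide),
    dH_eq {1} {1} (n:=0) (by decide), dH_eq {1} ∅ (n:=1) (by decide)]
  norm_num

lemma lamH_01 : lam dH {0,1} = 2 := by
  rw [lam_eq, dH_eq {0,1} {0} (n:=1) (by decide), dH_eq {0,1} {0,1} (n:=0) (by decide),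
    dH_eq {0,1} {1} (n:=1) (by decide), dH_eq {0,1} ∅ (n:=2) (by decide)]
  norm_num

lemma lamH_all (τ : Finset (Fin 2)) : lam dH τ = 2 := by
  fin_cases τ
  · exact lamH_e
  · exact lamH_0
  · exact lamH_1
  · exact lamH_01

lemma lamD_1 : lam dD {1} = 2 := by
  rw [lam_eq]; simp +decide [dD]; norm_num

lemma lamD_0 : lam dD {0} = 1 := by
  rw [lam_eq]; simp +decide [dD]

lemma mem_H : ({1} : Finset (Fin 2)) ∈ minimalTypes dH := by
  simp only [minimalTypes, Finset.mem_filter, Finset.mem_univ, true_and]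
  intro τ'
  rw [lamH_all, lamH_all]

lemma not_mem_D : ({1} : Finset (Fin 2)) ∉ minimalTypes dD := by
  simp only [minimalTypes, Finset.mem_filter, Finset.mem_univ, true_and]
  intro h
  have := h {0}
  rw [lamD_1, lamD_0] at this
  norm_num at this

/-- The sets of drastic-minimal and Hamming-minimal types differ. -/
theorem drastic_hamming_minimal_types_differ :
    minimalTypes dD ≠ minimalTypes dH := by
  intro h
  exact not_mem_D (h ▸ mem_H)
end
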